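/- (Block formula (1.8) for the resolvent, bounded-entry case.) Let α ∈ ℂ with α ∉ σ(C) and α ∉ σ(M). Then the Schur complement S(α) = A − αI − B(C − αI)⁻¹B* is boundedly invertible, and for all (x, y) ∈ H₁ ⊕ H₂ one has (M − αI)⁻¹(x, y) = ( S(α)⁻¹x − S(α)⁻¹B(C − αI)⁻¹y , −(C − αI)⁻¹B*S(α)⁻¹x + (C − αI)⁻¹y + (C − αI)⁻¹B*S(α)⁻¹B(C − αI)⁻¹y ). -/

import Mathlib

open ContinuousLinearMap

variable {H₁ H₂ : Type*}
  [NormedAddCommGroup H₁] [InnerProductSpace ℂ H₁] [CompleteSpace H₁]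
  [NormedAddCommGroup H₂] [InnerProductSpace ℂ H₂] [CompleteSpace H₂]

/-- The block operator matrix `M(x,y) = (A x + B y, B* x + C y)` on the Hilbert-space
direct sum `H₁ ⊕ H₂` (realised as `WithLp 2 (H₁ × H₂)`). -/
noncomputable def blockOp (A : H₁ →L[ℂ] H₁) (B : H₂ →L[ℂ] H₁) (C : H₂ →L[ℂ] H₂) :
    WithLp 2 (H₁ × H₂) →L[ℂ] WithLp 2 (H₁ × H₂) :=
  (((WithLp.prodContinuousLinearEquiv 2 ℂ H₁ H₂).symm :
      (H₁ × H₂) →L[ℂ] WithLp 2 (H₁ × H₂)) ∘L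
    ((A ∘L ContinuousLinearMap.fst ℂ H₁ H₂ + B ∘L ContinuousLinearMap.snd ℂ H₁ H₂).prod
      ((ContinuousLinearMap.adjoint B) ∘L ContinuousLinearMap.fst ℂ H₁ H₂
        + C ∘L ContinuousLinearMap.snd ℂ H₁ H₂))) ∘L
    ((WithLp.prodContinuousLinearEquiv 2 ℂ H₁ H₂) :
      WithLp 2 (H₁ × H₂) →L[ℂ] (H₁ × H₂))

/-- The first Schur complement `S(λ) = A - λ I - B (C - λ I)⁻¹ B*` (for `λ ∉ σ(C)`;
`Ring.inverse` is junk otherwise). -/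
noncomputable def schurC (A : H₁ →L[ℂ] H₁) (B : H₂ →L[ℂ] H₁) (C : H₂ →L[ℂ] H₂)
    (lam : ℂ) : H₁ →L[ℂ] H₁ :=
  A - lam • 1 - B ∘L (Ring.inverse (C - lam • 1)) ∘L (ContinuousLinearMap.adjoint B)

/-!
Eliminating the second variable with `(C - α)⁻¹` gives, for all `u`, `w` and `p`,
`(M - α)(u, (C - α)⁻¹(w - B* u)) = (S(α) u + B (C - α)⁻¹ w, w)` and
`((M - α) p)₁ = S(α) p₁ + B (C - α)⁻¹ ((M - α) p)₂`,
the pointwise form of the block LDU factorisation of `M - α`. By these identities the `(1,1)`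
corner of `(M - α)⁻¹` is a two-sided inverse of `S(α)`, and taking `w = y` and
`u = S(α)⁻¹(x - B (C - α)⁻¹ y)` in the first one solves `(M - α)(u, v) = (x, y)`.
-/

open scoped Ring

theorem map_ringInverse {F M₀ N₀ : Type*} [MonoidWithZero M₀] [MonoidWithZero N₀]
    [EquivLike F M₀ N₀] [MulEquivClass F M₀ N₀] (f : F) (a : M₀) : f a⁻¹ʳ = (f a)⁻¹ʳ := by
  by_cases ha : IsUnit a
  · rw [← Ring.inverse_mul_cancel_left (f a) (f a⁻¹ʳ) (ha.map f), ← map_mul,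
      Ring.mul_inverse_cancel a ha, map_one, mul_one]
  · rw [Ring.inverse_non_unit a ha, Ring.inverse_non_unit (f a) ((isUnit_map_iff f a).not.2 ha),
      map_zero]

theorem spectrum.isUnit_sub_smul_one_of_notMem {R A : Type*} [CommSemiring R] [Ring A]
    [Algebra R A] {r : R} {a : A} (h : r ∉ spectrum R a) : IsUnit (a - r • 1) := by
  simpa [Algebra.algebraMap_eq_smul_one] using (spectrum.notMem_iff.mp h).neg

namespace ContinuousLinearMap

section RingInverse

variable {R M : Type*} [Semiring R] [TopologicalSpace M] [AddCommMonoid M] [Module R M]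
  {T : M →L[R] M}

theorem apply_ringInverse_apply (hT : IsUnit T) (x : M) : T (T⁻¹ʳ x) = x :=
  DFunLike.congr_fun (Ring.mul_inverse_cancel T hT) x

theorem ringInverse_apply_apply (hT : IsUnit T) (x : M) : T⁻¹ʳ (T x) = x :=
  DFunLike.congr_fun (Ring.inverse_mul_cancel T hT) x

theorem ringInverse_apply_eq_iff (hT : IsUnit T) {x y : M} : T⁻¹ʳ x = y ↔ x = T y := by
  constructor
  · rintro rfl
    exact (apply_ringInverse_apply hT x).symm
  · rintro rfl
    exact ringInverse_apply_apply hT y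

end RingInverse

section Blocks

variable {R E F : Type*} [Ring R]
  [TopologicalSpace E] [AddCommGroup E] [IsTopologicalAddGroup E] [Module R E]
  [TopologicalSpace F] [AddCommGroup F] [IsTopologicalAddGroup F] [Module R F]
  (A : E →L[R] E) (B : F →L[R] E) (C : E →L[R] F) (D : F →L[R] F)

def fromBlocks : E × F →L[R] E × F :=
  (A ∘L fst R E F + B ∘L snd R E F).prod (C ∘L fst R E F + D ∘L snd R E F)

noncomputable def schurComplement : E →L[R] E :=
  A - B ∘L D⁻¹ʳ ∘L C

@[simp]
theorem fromBlocks_apply (p : E × F) :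
    fromBlocks A B C D p = (A p.1 + B p.2, C p.1 + D p.2) :=
  rfl

variable {A B C D}

theorem fromBlocks_apply_eliminate (hD : IsUnit D) (u : E) (w : F) :
    fromBlocks A B C D (u, D⁻¹ʳ (w - C u)) = (schurComplement A B C D u + B (D⁻¹ʳ w), w) := by
  simp only [fromBlocks_apply, schurComplement, apply_ringInverse_apply hD, sub_apply,
    comp_apply, map_sub, add_sub_cancel, Prod.mk.injEq, and_true]
  abel

theorem fst_fromBlocks_apply (hD : IsUnit D) (p : E × F) :
    (fromBlocks A B C D p).1 = schurComplement A B C D p.1 + B (D⁻¹ʳ (fromBlocks A B C D p).2) := by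
  simp only [fromBlocks_apply, schurComplement, ringInverse_apply_apply hD, sub_apply,
    comp_apply, map_add]
  abel

theorem isUnit_schurComplement (hD : IsUnit D) (hT : IsUnit (fromBlocks A B C D)) :
    IsUnit (schurComplement A B C D) := by
  refine isUnit_iff_exists.2 ⟨fst R E F ∘L (fromBlocks A B C D)⁻¹ʳ ∘L inl R E F, ?_, ?_⟩
  · ext x
    simpa [apply_ringInverse_apply hT] using
      (fst_fromBlocks_apply (A := A) (B := B) (C := C) hD ((fromBlocks A B C D)⁻¹ʳ (x, 0))).symm
  · ext u
    have hu := (ringInverse_apply_eq_iff hT).2 (fromBlocks_apply_eliminate hD u 0).symm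
    simpa using congrArg Prod.fst hu

theorem ringInverse_fromBlocks_apply (hD : IsUnit D) (hT : IsUnit (fromBlocks A B C D))
    (x : E) (y : F) :
    (fromBlocks A B C D)⁻¹ʳ (x, y) =
      ((schurComplement A B C D)⁻¹ʳ (x - B (D⁻¹ʳ y)),
        D⁻¹ʳ (y - C ((schurComplement A B C D)⁻¹ʳ (x - B (D⁻¹ʳ y))))) := by
  rw [ringInverse_apply_eq_iff hT, fromBlocks_apply_eliminate hD,
    apply_ringInverse_apply (isUnit_schurComplement hD hT), sub_add_cancel]

end Blocks

theorem fromBlocks_sub_smul_one {R E F : Type*} [CommRing R]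
    [TopologicalSpace E] [AddCommGroup E] [IsTopologicalAddGroup E] [Module R E]
    [ContinuousConstSMul R E]
    [TopologicalSpace F] [AddCommGroup F] [IsTopologicalAddGroup F] [Module R F]
    [ContinuousConstSMul R F]
    (A : E →L[R] E) (B : F →L[R] E) (C : E →L[R] F) (D : F →L[R] F) (α : R) :
    fromBlocks A B C D - α • 1 = fromBlocks (A - α • 1) B C (D - α • 1) := by
  refine ContinuousLinearMap.ext fun p => Prod.ext ?_ ?_ <;>
    simp only [sub_apply, smul_apply, fromBlocks_apply, Prod.fst_sub,
      Prod.snd_sub, Prod.smul_fst, Prod.smul_snd] <;> abel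

end ContinuousLinearMap

theorem schurC_eq_schurComplement (A : H₁ →L[ℂ] H₁) (B : H₂ →L[ℂ] H₁) (C : H₂ →L[ℂ] H₂)
    (α : ℂ) : schurC A B C α = schurComplement (A - α • 1) B (adjoint B) (C - α • 1) :=
  rfl

theorem blockOp_sub_smul_one (A : H₁ →L[ℂ] H₁) (B : H₂ →L[ℂ] H₁) (C : H₂ →L[ℂ] H₂) (α : ℂ) :
    blockOp A B C - α • 1 = (WithLp.prodContinuousLinearEquiv 2 ℂ H₁ H₂).symm.conjContinuousAlgEquiv
      (fromBlocks (A - α • 1) B (adjoint B) (C - α • 1)) := by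
  rw [← fromBlocks_sub_smul_one, map_sub, map_smul, map_one]
  rfl

theorem resolvent_block_formula
    (A : H₁ →L[ℂ] H₁)
    (C : H₂ →L[ℂ] H₂) (B : H₂ →L[ℂ] H₁)
    (α : ℂ) (hαC : α ∉ spectrum ℂ C) (hαM : α ∉ spectrum ℂ (blockOp A B C)) :
    IsUnit (schurC A B C α) ∧
    ∀ (x : H₁) (y : H₂),
      Ring.inverse (blockOp A B C - α • 1)
          ((WithLp.prodContinuousLinearEquiv 2 ℂ H₁ H₂).symm (x, y)) =
        (WithLp.prodContinuousLinearEquiv 2 ℂ H₁ H₂).symm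
          (Ring.inverse (schurC A B C α) x -
              Ring.inverse (schurC A B C α) (B (Ring.inverse (C - α • 1) y)),
            -(Ring.inverse (C - α • 1)
                (ContinuousLinearMap.adjoint B (Ring.inverse (schurC A B C α) x))) +
              Ring.inverse (C - α • 1) y +
              Ring.inverse (C - α • 1)
                (ContinuousLinearMap.adjoint B
                  (Ring.inverse (schurC A B C α) (B (Ring.inverse (C - α • 1) y))))) := by
  have hD := spectrum.isUnit_sub_smul_one_of_notMem hαC
  have hM := spectrum.isUnit_sub_smul_one_of_notMem hαM
  rw [blockOp_sub_smul_one] at hM ⊢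
  have hT := (isUnit_map_iff _ _).1 hM
  rw [schurC_eq_schurComplement]
  refine ⟨isUnit_schurComplement hD hT, fun x y => ?_⟩
  rw [← map_ringInverse, ContinuousLinearEquiv.conjContinuousAlgEquiv_apply_apply,
    ContinuousLinearEquiv.symm_symm, ContinuousLinearEquiv.apply_symm_apply,
    ringInverse_fromBlocks_apply hD hT]
  refine congrArg _ (Prod.ext (map_sub _ _ _) ?_)
  simp only [map_sub]
  abel
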